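/- arXiv:1302.0315 — 2 statements merged into one kernel-verified Lean document; each statement's English description precedes it below -/
import Mathlib

section
/- For every μ ≥ 1, at least one of the following holds for the final iterate of Algorithm 2: (i) E(u^d) − E* ≤ μ·ε*, or (ii) E(u^d) − Ê ≤ (1/2)·(max(0, 1 − (μ−1)²/(8μ(μ+1)γ²)))^d. (This is Lemma 4: the greedy coordinate descent with gradients measured in the empirical ℓ2 norm either reaches loss within a factor μ of the best d-kernel loss, or converges at a geometric rate with ratio 1 − τ, τ = (μ−1)²/(8μ(μ+1)γ²).) -/
open Matrix Finset

private lemma dot_self_nonneg' {N : ℕ} (x : Fin N → ℝ) : 0 ≤ x ⬝ᵥ x :=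
  Finset.sum_nonneg fun _ _ => mul_self_nonneg _

private lemma dot_sum {N : ℕ} {ι : Type*} (s : Finset ι) (x : Fin N → ℝ)
    (f : ι → Fin N → ℝ) : x ⬝ᵥ (∑ j ∈ s, f j) = ∑ j ∈ s, x ⬝ᵥ f j := by
  simp only [dotProduct, Finset.sum_apply, Finset.mul_sum]
  rw [Finset.sum_comm]

private lemma dot_le_sqrt {N : ℕ} (x y : Fin N → ℝ) :
    x ⬝ᵥ y ≤ Real.sqrt (x ⬝ᵥ x) * Real.sqrt (y ⬝ᵥ y) := by
  have h := sum_mul_sq_le_sq_mul_sq Finset.univ x y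
  calc x ⬝ᵥ y ≤ |x ⬝ᵥ y| := le_abs_self _
    _ = Real.sqrt ((x ⬝ᵥ y)^2) := (Real.sqrt_sq_eq_abs _).symm
    _ ≤ Real.sqrt ((x ⬝ᵥ x) * (y ⬝ᵥ y)) := by
        apply Real.sqrt_le_sqrt
        simpa [dotProduct, sq, Finset.mul_sum, Finset.sum_mul, mul_pow] using h
    _ = Real.sqrt (x ⬝ᵥ x) * Real.sqrt (y ⬝ᵥ y) :=
        Real.sqrt_mul (dot_self_nonneg' x) _

private lemma herm_dot {N : ℕ} {A : Matrix (Fin N) (Fin N) ℝ} (hA : A.IsHermitian)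
    (x y : Fin N → ℝ) : (A *ᵥ x) ⬝ᵥ y = x ⬝ᵥ (A *ᵥ y) := by
  rw [dotProduct_comm, Matrix.dotProduct_mulVec, ← Matrix.mulVec_transpose]
  have : Aᵀ = A := by simpa using hA.eq
  rw [this, dotProduct_comm]

private lemma psd_dot_nonneg {N : ℕ} {A : Matrix (Fin N) (Fin N) ℝ} (hA : A.PosSemidef)
    (x : Fin N → ℝ) : 0 ≤ x ⬝ᵥ (A *ᵥ x) := by simpa using hA.dotProduct_mulVec_nonneg x

private lemma psd_range_sq {N : ℕ} {A : Matrix (Fin N) (Fin N) ℝ} (hA : A.PosSemidef)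
    (v : Fin N → ℝ) : ∃ w, A *ᵥ (A *ᵥ w) = A *ᵥ v := by
  classical
  set f := A.mulVecLin with hf
  have hker : LinearMap.ker (f ∘ₗ f) = LinearMap.ker f := by
    apply le_antisymm
    · intro w hw
      simp only [LinearMap.mem_ker, LinearMap.comp_apply, Matrix.mulVecLin_apply] at hw ⊢
      have h0 : (A *ᵥ w) ⬝ᵥ (A *ᵥ w) = 0 := by
        rw [herm_dot hA.isHermitian w (A *ᵥ w)]
        have hw' : A *ᵥ (A *ᵥ w) = 0 := by simpa [hf, Matrix.mulVecLin_apply] using hw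
        rw [hw', dotProduct_zero]
      exact dotProduct_self_eq_zero.mp h0
    · intro w hw
      simp only [LinearMap.mem_ker] at hw ⊢
      simp [LinearMap.comp_apply, hw, LinearMap.mem_ker]
  have hle : LinearMap.range (f ∘ₗ f) ≤ LinearMap.range f := LinearMap.range_comp_le_range f f
  have hrank : Module.finrank ℝ (LinearMap.range f) ≤
      Module.finrank ℝ (LinearMap.range (f ∘ₗ f)) := by
    have h1 := LinearMap.finrank_range_add_finrank_ker f
    have h2 := LinearMap.finrank_range_add_finrank_ker (f ∘ₗ f)
    rw [hker] at h2
    omega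
  have heq : LinearMap.range (f ∘ₗ f) = LinearMap.range f :=
    Submodule.eq_of_le_of_finrank_le hle hrank
  have hmem : A *ᵥ v ∈ LinearMap.range (f ∘ₗ f) := heq ▸ ⟨v, rfl⟩
  obtain ⟨w, hw⟩ := hmem
  exact ⟨w, hw⟩

private lemma step_ineq {N : ℕ} {A : Matrix (Fin N) (Fin N) ℝ} (hA : A.PosSemidef)
    (h1 : (1 - A).PosSemidef) (g : Fin N → ℝ) :
    (g - A *ᵥ g) ⬝ᵥ (g - A *ᵥ g) ≤ g ⬝ᵥ g - (A *ᵥ g) ⬝ᵥ (A *ᵥ g) := by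
  classical
  have key : 0 ≤ g ⬝ᵥ ((A - A * A) *ᵥ g) := by
    have hfact : A - A * A = (1 - A) * A * (1 - A) + A * (1 - A) * A := by noncomm_ring
    rw [hfact, Matrix.add_mulVec, dotProduct_add]
    have t1 : g ⬝ᵥ (((1 - A) * A * (1 - A)) *ᵥ g) = ((1 - A) *ᵥ g) ⬝ᵥ (A *ᵥ ((1 - A) *ᵥ g)) := by
      simp only [← Matrix.mulVec_mulVec]
      rw [← herm_dot h1.isHermitian]
    have t2 : g ⬝ᵥ ((A * (1 - A) * A) *ᵥ g) = (A *ᵥ g) ⬝ᵥ ((1 - A) *ᵥ (A *ᵥ g)) := by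
      simp only [← Matrix.mulVec_mulVec]
      rw [← herm_dot hA.isHermitian]
    rw [t1, t2]
    exact add_nonneg (psd_dot_nonneg hA _) (psd_dot_nonneg h1 _)
  have expand : g ⬝ᵥ ((A - A * A) *ᵥ g) = g ⬝ᵥ (A *ᵥ g) - (A *ᵥ g) ⬝ᵥ (A *ᵥ g) := by
    rw [Matrix.sub_mulVec, dotProduct_sub, ← Matrix.mulVec_mulVec,
      herm_dot hA.isHermitian g (A *ᵥ g)]
  have hcross : (A *ᵥ g) ⬝ᵥ g = g ⬝ᵥ (A *ᵥ g) := dotProduct_comm _ _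
  have lhs : (g - A *ᵥ g) ⬝ᵥ (g - A *ᵥ g) =
      g ⬝ᵥ g - 2 * (g ⬝ᵥ (A *ᵥ g)) + (A *ᵥ g) ⬝ᵥ (A *ᵥ g) := by
    simp [dotProduct_sub, sub_dotProduct, hcross]; ring
  rw [lhs]
  rw [expand] at key
  linarith

set_option maxHeartbeats 1000000 in
/-- Lemma 4: for every `μ ≥ 1`, the final iterate of Algorithm 2 either has
excess loss at most `μ ε*`, or satisfies the geometric bound
`E(u^d) − Ê ≤ (1/2)(max(0, 1 − (μ−1)²/(8μ(μ+1)γ²)))^d`. -/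
theorem stmt_5 (N m d : ℕ) (hN : 1 ≤ N) (hm : 1 ≤ m) (hd : 1 ≤ d)
    (y : Fin N → ℝ) (hy : y ⬝ᵥ y ≤ (N : ℝ))
    (Khat : Fin m → Matrix (Fin N) (Fin N) ℝ)
    (hPSD : ∀ j, (Khat j).PosSemidef)
    (hle1 : ∀ j, (1 - Khat j).PosSemidef)
    (E : (Fin N → ℝ) → ℝ)
    (hE : ∀ u : Fin N → ℝ, E u = (1 / (2 * N)) * ((u - y) ⬝ᵥ (u - y)))
    (u : ℕ → Fin N → ℝ) (jsel : ℕ → Fin m)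
    (hu0 : u 0 = 0)
    (hjmax : ∀ k < d, ∀ j : Fin m,
      (Khat j *ᵥ (u k - y)) ⬝ᵥ (Khat j *ᵥ (u k - y)) ≤
        (Khat (jsel k) *ᵥ (u k - y)) ⬝ᵥ (Khat (jsel k) *ᵥ (u k - y)))
    (hustep : ∀ k < d, u (k + 1) = u k - Khat (jsel k) *ᵥ (u k - y))
    (Estar Ehat εstar : ℝ)
    (hEstar : Estar = sInf {e : ℝ | ∃ a : Fin m → Fin N → ℝ,
      e = E (∑ j, Khat j *ᵥ a j)})
    (hEhat : Ehat = sInf {e : ℝ | ∃ (J : Finset (Fin m)) (a : Fin m → Fin N → ℝ),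
      J.card ≤ d ∧ e = E (∑ j ∈ J, Khat j *ᵥ a j)})
    (hεstar : εstar = Ehat - Estar)
    (γ : ℝ) (hγ : 1 ≤ γ)
    (hγbound : ∀ J : Finset (Fin m), J.card ≤ 2 * d →
      ∀ a : Fin m → Fin N → ℝ,
        (∀ j, ∃ b : Fin N → ℝ, a j = Khat j *ᵥ b) → (∀ j ∉ J, a j = 0) →
        ∑ j, Real.sqrt (a j ⬝ᵥ a j) ≤
          γ * Real.sqrt ((∑ j, Khat j *ᵥ a j) ⬝ᵥ (∑ j, Khat j *ᵥ a j))) :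
    ∀ μ : ℝ, 1 ≤ μ →
      E (u d) - Estar ≤ μ * εstar ∨
      E (u d) - Ehat ≤ (1/2) * (max 0 (1 - (μ - 1)^2 / (8 * μ * (μ + 1) * γ^2)))^d := by
  classical
  intro μ hμ
  right
  have hN0 : (0:ℝ) < N := by exact_mod_cast hN
  have hγ0 : (0:ℝ) < γ := lt_of_lt_of_le one_pos hγ
  have hγ2 : (0:ℝ) < γ^2 := by positivity
  set ρ : ℝ := 1 - 1/γ^2 with hρ
  have hρ0 : 0 ≤ ρ := by
    have h1 : 1/γ^2 ≤ 1 := by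
      rw [div_le_one hγ2]
      nlinarith [hγ]
    simp only [hρ]; linarith
  have hEnn : ∀ v, 0 ≤ E v := fun v => by
    rw [hE]; exact mul_nonneg (by positivity) (dot_self_nonneg' _)
  -- decomposition of iterates
  have hdecomp : ∀ k, k ≤ d → ∃ c : Fin m → Fin N → ℝ,
      (∀ j, ∃ b, c j = Khat j *ᵥ b) ∧
      (∀ j ∉ (Finset.range k).image (fun i => jsel i), c j = 0) ∧
      u k = ∑ j, Khat j *ᵥ c j := by
    intro k
    induction k with
    | zero =>
      intro _
      exact ⟨0, fun j => ⟨0, by simp⟩, fun j _ => rfl, by simp [hu0]⟩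
    | succ k ih =>
      intro hk1
      obtain ⟨c, hcol, hsupp, huk⟩ := ih (Nat.le_of_succ_le hk1)
      have hkd : k < d := Nat.lt_of_succ_le hk1
      obtain ⟨w, hw⟩ := psd_range_sq (hPSD (jsel k)) (u k - y)
      refine ⟨fun j => c j - if j = jsel k then Khat (jsel k) *ᵥ w else 0, ?_, ?_, ?_⟩
      · intro j
        obtain ⟨b, hb⟩ := hcol j
        by_cases hj : j = jsel k
        · subst hj; exact ⟨b - w, by rw [Matrix.mulVec_sub, ← hb]; simp⟩
        · exact ⟨b, by simp [hj, hb]⟩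
      · intro j hj
        have h1 : j ∉ (Finset.range k).image (fun i => jsel i) := by
          intro h; exact hj (Finset.image_subset_image (by
            intro x hx; simp only [Finset.mem_range] at hx ⊢; omega) h)
        have h2 : j ≠ jsel k := by
          intro h; apply hj
          simp only [Finset.mem_image, Finset.mem_range]
          exact ⟨k, by omega, h.symm⟩
        simp [hsupp j h1, h2]
      · have hterm : ∀ j : Fin m,
            Khat j *ᵥ (c j - if j = jsel k then Khat (jsel k) *ᵥ w else 0) =
            Khat j *ᵥ c j - (if j = jsel k then Khat (jsel k) *ᵥ (Khat (jsel k) *ᵥ w) else 0) := by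
          intro j
          rw [Matrix.mulVec_sub]
          congr 1
          by_cases hj : j = jsel k
          · subst hj; simp
          · simp [hj]
        have hsum : ∑ j, Khat j *ᵥ (c j - if j = jsel k then Khat (jsel k) *ᵥ w else 0) =
            (∑ j, Khat j *ᵥ c j) - Khat (jsel k) *ᵥ (u k - y) := by
          rw [Finset.sum_congr rfl fun j _ => hterm j, Finset.sum_sub_distrib,
            Finset.sum_ite_eq' Finset.univ (jsel k)
              (fun _ => Khat (jsel k) *ᵥ (Khat (jsel k) *ᵥ w))]
          simp [hw]
        rw [hustep k hkd, hsum, ← huk]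
  -- nonempty and bdd below
  set Sh : Set ℝ := {e : ℝ | ∃ (J : Finset (Fin m)) (a : Fin m → Fin N → ℝ),
      J.card ≤ d ∧ e = E (∑ j ∈ J, Khat j *ᵥ a j)} with hSh
  have hne : Sh.Nonempty :=
    ⟨E (∑ j ∈ (∅ : Finset (Fin m)), Khat j *ᵥ (0 : Fin N → ℝ)), ⟨∅, fun _ => 0, by simp, rfl⟩⟩
  have hbdd : BddBelow Sh := ⟨0, fun e he => by
    obtain ⟨J, a, _, rfl⟩ := he; exact hEnn _⟩
  have main : E (u d) - Ehat ≤ (1/2) * ρ^d := by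
    refine le_of_forall_pos_le_add ?_
    intro ε hε
    obtain ⟨e, he, hlt⟩ : ∃ e ∈ Sh, e < Ehat + ε := by
      rw [hEhat]
      exact Real.lt_sInf_add_pos hne hε
    obtain ⟨J, a, hJcard, rfl⟩ := he
    set uh := ∑ j ∈ J, Khat j *ᵥ a j with huh
    -- column-space representation of uh
    choose w hwspec using fun j => psd_range_sq (hPSD j) (a j)
    set A' : Fin m → Fin N → ℝ := fun j => if j ∈ J then Khat j *ᵥ w j else 0 with hA'
    have hA'col : ∀ j, ∃ b, A' j = Khat j *ᵥ b := fun j => by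
      by_cases h : j ∈ J
      · exact ⟨w j, by simp [hA', h]⟩
      · exact ⟨0, by simp [hA', h]⟩
    have hA'supp : ∀ j ∉ J, A' j = 0 := fun j hj => by simp [hA', hj]
    have huheq : ∑ j, Khat j *ᵥ A' j = uh := by
      rw [huh, ← Finset.sum_subset (Finset.subset_univ J) (fun x _ hx => by
        simp [hA', hx])]
      refine Finset.sum_congr rfl fun j hj => ?_
      simp [hA', hj, hwspec j]
    -- per-step contraction
    have step : ∀ k, k < d →
        max 0 (E (u (k+1)) - E uh) ≤ ρ * max 0 (E (u k) - E uh) := by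
      intro k hk
      set g := u k - y with hg
      set j0 := jsel k with hj0
      set M2 := (Khat j0 *ᵥ g) ⬝ᵥ (Khat j0 *ᵥ g) with hM2
      have hM2nn : 0 ≤ M2 := dot_self_nonneg' _
      have hdesc : E (u (k+1)) ≤ E (u k) - (1/(2*(N:ℝ))) * M2 := by
        have h1 := step_ineq (hPSD j0) (hle1 j0) g
        have h2 : u (k+1) - y = g - Khat j0 *ᵥ g := by
          rw [hustep k hk, hg]; abel
        rw [hE (u (k+1)), hE (u k), h2, ← hg]
        have hc : (0:ℝ) ≤ 1/(2*(N:ℝ)) := by positivity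
        nlinarith [mul_le_mul_of_nonneg_left h1 hc]
      by_cases hpos : 0 < E (u k) - E uh
      · -- main chain
        obtain ⟨c, hccol, hcsupp, huk⟩ := hdecomp k (le_of_lt hk)
        set aa : Fin m → Fin N → ℝ := fun j => A' j - c j with haa
        set D := uh - u k with hD
        have hDsum : D = ∑ j, Khat j *ᵥ aa j := by
          rw [hD, ← huheq, huk, ← Finset.sum_sub_distrib]
          exact Finset.sum_congr rfl fun j _ => by
            show _ = Khat j *ᵥ (A' j - c j)
            rw [Matrix.mulVec_sub]
        have haacol : ∀ j, ∃ b, aa j = Khat j *ᵥ b := fun j => by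
          obtain ⟨b1, hb1⟩ := hA'col j
          obtain ⟨b2, hb2⟩ := hccol j
          refine ⟨b1 - b2, ?_⟩
          show A' j - c j = _
          rw [hb1, hb2, Matrix.mulVec_sub]
        set Jk := J ∪ (Finset.range k).image (fun i => jsel i) with hJk
        have haasupp : ∀ j ∉ Jk, aa j = 0 := fun j hj => by
          rw [hJk, Finset.mem_union] at hj
          push_neg at hj
          show A' j - c j = 0
          rw [hA'supp j hj.1, hcsupp j hj.2, sub_zero]
        have hJkcard : Jk.card ≤ 2 * d := by
          calc Jk.card ≤ J.card + ((Finset.range k).image (fun i => jsel i)).card :=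
                Finset.card_union_le _ _
            _ ≤ d + k := by
                gcongr
                exact le_trans (Finset.card_image_le) (by simp)
            _ ≤ 2 * d := by omega
        have hgb := hγbound Jk hJkcard aa haacol haasupp
        rw [← hDsum] at hgb
        -- inner product bound
        have hip : -(g ⬝ᵥ D) ≤ Real.sqrt M2 * (γ * Real.sqrt (D ⬝ᵥ D)) := by
          have h1 : -(g ⬝ᵥ D) = ∑ j, (-(Khat j *ᵥ g)) ⬝ᵥ aa j := by
            rw [hDsum, dot_sum, ← Finset.sum_neg_distrib]
            refine Finset.sum_congr rfl fun j _ => ?_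
            rw [neg_dotProduct, herm_dot (hPSD j).isHermitian g (aa j)]
          rw [h1]
          have h2 : ∀ j : Fin m, (-(Khat j *ᵥ g)) ⬝ᵥ aa j ≤
              Real.sqrt M2 * Real.sqrt (aa j ⬝ᵥ aa j) := by
            intro j
            refine le_trans (dot_le_sqrt _ _) ?_
            have hnn : (-(Khat j *ᵥ g)) ⬝ᵥ (-(Khat j *ᵥ g)) = (Khat j *ᵥ g) ⬝ᵥ (Khat j *ᵥ g) := by
              rw [neg_dotProduct, dotProduct_neg, neg_neg]
            rw [hnn]
            have hle' : (Khat j *ᵥ g) ⬝ᵥ (Khat j *ᵥ g) ≤ M2 := hjmax k hk j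
            exact mul_le_mul_of_nonneg_right (Real.sqrt_le_sqrt hle') (Real.sqrt_nonneg _)
          calc ∑ j, (-(Khat j *ᵥ g)) ⬝ᵥ aa j ≤ ∑ j, Real.sqrt M2 * Real.sqrt (aa j ⬝ᵥ aa j) :=
                Finset.sum_le_sum fun j _ => h2 j
            _ = Real.sqrt M2 * ∑ j, Real.sqrt (aa j ⬝ᵥ aa j) := by rw [Finset.mul_sum]
            _ ≤ Real.sqrt M2 * (γ * Real.sqrt (D ⬝ᵥ D)) := by
                exact mul_le_mul_of_nonneg_left hgb (Real.sqrt_nonneg _)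
        -- energy identity
        have key1 : (N:ℝ) * (E (u k) - E uh) + (D ⬝ᵥ D)/2 = -(g ⬝ᵥ D) := by
          rw [hE (u k), hE uh, ← hg]
          have h3 : uh - y = D + g := by rw [hD, hg]; abel
          rw [h3]
          have hexp : (D + g) ⬝ᵥ (D + g) = D ⬝ᵥ D + 2*(g ⬝ᵥ D) + g ⬝ᵥ g := by
            rw [dotProduct_add, add_dotProduct, add_dotProduct,
              dotProduct_comm D g]
            ring
          rw [hexp]
          field_simp
          ring
        set Δ := E (u k) - E uh with hΔ
        set R := Real.sqrt (D ⬝ᵥ D) with hR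
        have hRnn : 0 ≤ R := Real.sqrt_nonneg _
        have hR2 : R^2 = D ⬝ᵥ D := Real.sq_sqrt (dot_self_nonneg' _)
        have hchain : (N:ℝ) * Δ + R^2/2 ≤ Real.sqrt M2 * (γ * R) := by
          rw [hR2, key1]; exact hip
        have hRpos : 0 < R := by
          rcases lt_or_eq_of_le hRnn with h | h
          · exact h
          · exfalso
            rw [← h] at hchain
            norm_num at hchain
            nlinarith [mul_pos hN0 hpos]
        have hamgm : Real.sqrt (2*(N:ℝ)*Δ) * R ≤ (N:ℝ)*Δ + R^2/2 := by
          have hs : (Real.sqrt (2*(N:ℝ)*Δ))^2 = 2*(N:ℝ)*Δ :=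
            Real.sq_sqrt (by positivity)
          nlinarith [sq_nonneg (Real.sqrt (2*(N:ℝ)*Δ) - R)]
        have hsle : Real.sqrt (2*(N:ℝ)*Δ) ≤ Real.sqrt M2 * γ := by
          have := le_trans hamgm hchain
          have h4 : Real.sqrt (2*(N:ℝ)*Δ) * R ≤ (Real.sqrt M2 * γ) * R := by
            calc Real.sqrt (2*(N:ℝ)*Δ) * R ≤ Real.sqrt M2 * (γ * R) := this
              _ = (Real.sqrt M2 * γ) * R := by ring
          exact le_of_mul_le_mul_right h4 hRpos
        have hsq : 2*(N:ℝ)*Δ ≤ M2 * γ^2 := by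
          have h5 : (Real.sqrt (2*(N:ℝ)*Δ))^2 ≤ (Real.sqrt M2 * γ)^2 := by
            apply pow_le_pow_left₀ (Real.sqrt_nonneg _) hsle
          rw [Real.sq_sqrt (by positivity : (0:ℝ) ≤ 2*(N:ℝ)*Δ), mul_pow,
            Real.sq_sqrt hM2nn] at h5
          exact h5
        have hfinal : E (u (k+1)) - E uh ≤ ρ * Δ := by
          have h6 : Δ/γ^2 ≤ M2/(2*(N:ℝ)) := by
            rw [div_le_div_iff₀ hγ2 (by positivity)]
            nlinarith [hsq]
          have h7 : E (u (k+1)) ≤ E (u k) - Δ/γ^2 := by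
            have hq : (1/(2*(N:ℝ))) * M2 = M2/(2*(N:ℝ)) := by ring
            rw [hq] at hdesc
            linarith
          rw [hρ]
          have : E (u k) - Δ/γ^2 - E uh = (1 - 1/γ^2) * Δ := by
            rw [hΔ]; field_simp; ring
          linarith [this ▸ sub_le_sub_right h7 (E uh)]
        have hmr : max 0 Δ = Δ := max_eq_right hpos.le
        rw [hmr]
        exact max_le (by positivity) hfinal
      · -- loss already below E uh: stays below
        push_neg at hpos
        have h8 : E (u (k+1)) - E uh ≤ 0 := by
          have hnn : 0 ≤ 1/(2*(N:ℝ)) * M2 := by positivity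
          linarith
        have h9 : max 0 (E (u k) - E uh) = 0 := max_eq_left hpos
        rw [h9, mul_zero]
        exact max_le le_rfl h8
    -- iterate the contraction
    have iter : ∀ k, k ≤ d → max 0 (E (u k) - E uh) ≤ ρ^k * (1/2) := by
      intro k
      induction k with
      | zero =>
        intro _
        have hE0 : E (u 0) ≤ 1/2 := by
          rw [hE, hu0]
          have : ((0:Fin N → ℝ) - y) ⬝ᵥ ((0:Fin N → ℝ) - y) = y ⬝ᵥ y := by
            simp [neg_dotProduct, dotProduct_neg]
          rw [this]
          rw [div_mul_eq_mul_div, one_mul, div_le_iff₀ (by positivity)]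
          nlinarith
        have := hEnn uh
        simp only [pow_zero, one_mul]
        exact max_le (by norm_num) (by linarith)
      | succ k ih =>
        intro hk1
        have hkd : k < d := Nat.lt_of_succ_le hk1
        calc max 0 (E (u (k+1)) - E uh) ≤ ρ * max 0 (E (u k) - E uh) := step k hkd
          _ ≤ ρ * (ρ^k * (1/2)) := mul_le_mul_of_nonneg_left (ih (le_of_lt hkd)) hρ0
          _ = ρ^(k+1) * (1/2) := by ring
    have hd' := iter d le_rfl
    have h10 : E (u d) - E uh ≤ ρ^d * (1/2) := le_trans (le_max_right _ _) hd'
    have h11 : E uh - Ehat < ε := by linarith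
    linarith
  -- compare ρ with the stated ratio
  have hcomp : ρ ≤ max 0 (1 - (μ - 1)^2 / (8 * μ * (μ + 1) * γ^2)) := by
    refine le_trans ?_ (le_max_right _ _)
    rw [hρ]
    have hden : (0:ℝ) < 8 * μ * (μ + 1) * γ^2 := by positivity
    have : (μ - 1)^2 / (8 * μ * (μ + 1) * γ^2) ≤ 1/γ^2 := by
      rw [div_le_div_iff₀ hden hγ2]
      nlinarith [sq_nonneg (μ - 1), hγ2.le]
    linarith
  calc E (u d) - Ehat ≤ (1/2) * ρ^d := main
    _ ≤ (1/2) * (max 0 (1 - (μ - 1)^2 / (8 * μ * (μ + 1) * γ^2)))^d := by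
        have := pow_le_pow_left₀ hρ0 hcomp d
        linarith
end

section
/- If ε* > 0 and the number of greedy iterations satisfies d ≥ 16γ²·ln(1/(12ε*)), then the final iterate of Algorithm 2 satisfies E(u^d) − E* ≤ 7·ε*. (This is the explicit-accuracy consequence of the geometric convergence, Theorem 2: when enough kernels are selected, the empirical loss of the sparse solution is within a constant factor of the best achievable excess loss ε* of any d-kernel combination.) -/
open Matrix Finset

private lemma dot_self_nonneg'_s6 {n : ℕ} (v : Fin n → ℝ) : 0 ≤ v ⬝ᵥ v :=
  Finset.sum_nonneg fun _ _ => mul_self_nonneg _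

private lemma dot_cs {n : ℕ} (v w : Fin n → ℝ) :
    v ⬝ᵥ w ≤ Real.sqrt (v ⬝ᵥ v) * Real.sqrt (w ⬝ᵥ w) := by
  have := Real.sum_mul_le_sqrt_mul_sqrt Finset.univ v w
  simpa [dotProduct, sq] using this

private lemma dot_sum_s6 {n m : ℕ} (v : Fin n → ℝ) (w : Fin m → Fin n → ℝ) :
    v ⬝ᵥ (∑ j, w j) = ∑ j, v ⬝ᵥ w j := by
  simp [dotProduct, Finset.mul_sum]
  exact Finset.sum_comm

private lemma expand_sub {n : ℕ} (g Kg : Fin n → ℝ) :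
    (g - Kg) ⬝ᵥ (g - Kg) = g ⬝ᵥ g - 2 * (g ⬝ᵥ Kg) + Kg ⬝ᵥ Kg := by
  simp only [dotProduct_sub, sub_dotProduct, dotProduct_comm Kg g]
  ring

private lemma dot_identity {n : ℕ} (g ghat : Fin n → ℝ) :
    g ⬝ᵥ (g - ghat) = (g ⬝ᵥ g - ghat ⬝ᵥ ghat + (g - ghat) ⬝ᵥ (g - ghat)) / 2 := by
  simp only [dotProduct_sub, sub_dotProduct, dotProduct_comm ghat g]
  ring

private lemma stepA_arith (N A B C : ℝ) (hN : 0 < N) (h : C ≤ B) :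
    1 / (2 * N) * (A - 2 * B + C) ≤ 1 / (2 * N) * A - C / (2 * N) := by
  have h1 : 1 / (2 * N) * (A - 2 * B + C) ≤ 1 / (2 * N) * (A - C) := by
    apply mul_le_mul_of_nonneg_left _ (by positivity)
    linarith
  calc 1 / (2 * N) * (A - 2 * B + C) ≤ 1 / (2 * N) * (A - C) := h1
    _ = 1 / (2 * N) * A - C / (2 * N) := by ring

private lemma symm_dot {n : ℕ} {A : Matrix (Fin n) (Fin n) ℝ} (hA : Aᵀ = A)
    (x y : Fin n → ℝ) : x ⬝ᵥ (A *ᵥ y) = (A *ᵥ x) ⬝ᵥ y := by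
  rw [Matrix.dotProduct_mulVec, ← hA, Matrix.vecMul_transpose, hA]

private lemma psd_quad {n : ℕ} {A : Matrix (Fin n) (Fin n) ℝ} (hA : A.PosSemidef)
    (x : Fin n → ℝ) : 0 ≤ x ⬝ᵥ (A *ᵥ x) := by
  have := hA.dotProduct_mulVec_nonneg x; simpa using this

private lemma herm_transpose {n : ℕ} {A : Matrix (Fin n) (Fin n) ℝ} (hA : A.IsHermitian) :
    Aᵀ = A := by
  exact (by simpa using hA : A.IsSymm).eq

/-- range(K²) ⊇ range(K) for symmetric PSD K. -/
private lemma exists_presqrt {n : ℕ} {K : Matrix (Fin n) (Fin n) ℝ} (hK : K.PosSemidef)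
    (c : Fin n → ℝ) : ∃ b, K *ᵥ (K *ᵥ b) = K *ᵥ c := by
  have hsym : Kᵀ = K := herm_transpose hK.1
  have hle : LinearMap.range (K * K).mulVecLin ≤ LinearMap.range K.mulVecLin := by
    rw [Matrix.mulVecLin_mul]
    exact LinearMap.range_comp_le_range _ _
  have hrank : (K * K).rank = K.rank := by
    have h := Matrix.rank_transpose_mul_self K
    rwa [hsym] at h
  have heq : LinearMap.range (K * K).mulVecLin = LinearMap.range K.mulVecLin :=
    Submodule.eq_of_le_of_finrank_le hle (le_of_eq hrank.symm)
  have hmem : K *ᵥ c ∈ LinearMap.range K.mulVecLin := ⟨c, rfl⟩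
  rw [← heq] at hmem
  obtain ⟨b, hb⟩ := hmem
  refine ⟨b, ?_⟩
  rw [Matrix.mulVec_mulVec]
  exact hb

open scoped MatrixOrder in
/-- `‖Kg‖² ≤ ⟨g, Kg⟩` when `0 ⪯ K ⪯ I`. -/
private lemma key_step {n : ℕ} {K : Matrix (Fin n) (Fin n) ℝ} (hK : K.PosSemidef)
    (hK1 : (1 - K).PosSemidef) (g : Fin n → ℝ) :
    (K *ᵥ g) ⬝ᵥ (K *ᵥ g) ≤ g ⬝ᵥ (K *ᵥ g) := by
  set S := CFC.sqrt K with hSdef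
  have hSS : S * S = K := CFC.sqrt_mul_sqrt_self K (Matrix.nonneg_iff_posSemidef.mpr hK)
  have hSsym : Sᵀ = S := herm_transpose (Matrix.nonneg_iff_posSemidef.mp (CFC.sqrt_nonneg K)).1
  set h := S *ᵥ g with hh
  have h1 : g ⬝ᵥ (K *ᵥ g) = h ⬝ᵥ h := by
    rw [← hSS, ← Matrix.mulVec_mulVec, symm_dot hSsym]
  have h2 : (K *ᵥ g) ⬝ᵥ (K *ᵥ g) = h ⬝ᵥ (K *ᵥ h) := by
    have hKg : K *ᵥ g = S *ᵥ h := by rw [hh, Matrix.mulVec_mulVec, hSS]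
    rw [hKg, show (S *ᵥ h) ⬝ᵥ (S *ᵥ h) = h ⬝ᵥ (S *ᵥ (S *ᵥ h)) from (symm_dot hSsym h _).symm,
      Matrix.mulVec_mulVec, hSS]
  rw [h1, h2]
  have h4 : h ⬝ᵥ ((1 - K) *ᵥ h) = h ⬝ᵥ h - h ⬝ᵥ (K *ᵥ h) := by
    rw [Matrix.sub_mulVec, Matrix.one_mulVec, dotProduct_sub]
  have h3 : 0 ≤ h ⬝ᵥ ((1 - K) *ᵥ h) := psd_quad hK1 h
  linarith [h4 ▸ h3]

set_option maxHeartbeats 2000000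

/-- Theorem 2 (explicit-accuracy consequence): if `ε* > 0` and
`d ≥ 16 γ² ln(1/(12 ε*))`, then the final iterate of Algorithm 2 satisfies
`E(u^d) − E* ≤ 7 ε*`. -/
theorem stmt_6 (N m d : ℕ) (hN : 1 ≤ N) (hm : 1 ≤ m) (hd : 1 ≤ d)
    (y : Fin N → ℝ) (hy : y ⬝ᵥ y ≤ (N : ℝ))
    (Khat : Fin m → Matrix (Fin N) (Fin N) ℝ)
    (hPSD : ∀ j, (Khat j).PosSemidef)
    (hle1 : ∀ j, (1 - Khat j).PosSemidef)
    (E : (Fin N → ℝ) → ℝ)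
    (hE : ∀ u : Fin N → ℝ, E u = (1 / (2 * N)) * ((u - y) ⬝ᵥ (u - y)))
    (u : ℕ → Fin N → ℝ) (jsel : ℕ → Fin m)
    (hu0 : u 0 = 0)
    (hjmax : ∀ k < d, ∀ j : Fin m,
      (Khat j *ᵥ (u k - y)) ⬝ᵥ (Khat j *ᵥ (u k - y)) ≤
        (Khat (jsel k) *ᵥ (u k - y)) ⬝ᵥ (Khat (jsel k) *ᵥ (u k - y)))
    (hustep : ∀ k < d, u (k + 1) = u k - Khat (jsel k) *ᵥ (u k - y))
    (Estar Ehat εstar : ℝ)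
    (hEstar : Estar = sInf {e : ℝ | ∃ a : Fin m → Fin N → ℝ,
      e = E (∑ j, Khat j *ᵥ a j)})
    (hEhat : Ehat = sInf {e : ℝ | ∃ (J : Finset (Fin m)) (a : Fin m → Fin N → ℝ),
      J.card ≤ d ∧ e = E (∑ j ∈ J, Khat j *ᵥ a j)})
    (hεstar : εstar = Ehat - Estar)
    (γ : ℝ) (hγ : 1 ≤ γ)
    (hγbound : ∀ J : Finset (Fin m), J.card ≤ 2 * d →
      ∀ a : Fin m → Fin N → ℝ,
        (∀ j, ∃ b : Fin N → ℝ, a j = Khat j *ᵥ b) → (∀ j ∉ J, a j = 0) →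
        ∑ j, Real.sqrt (a j ⬝ᵥ a j) ≤
          γ * Real.sqrt ((∑ j, Khat j *ᵥ a j) ⬝ᵥ (∑ j, Khat j *ᵥ a j)))
    (hεpos : 0 < εstar)
    (hdlarge : 16 * γ^2 * Real.log (1 / (12 * εstar)) ≤ (d : ℝ)) :
    E (u d) - Estar ≤ 7 * εstar := by
  have hNpos : (0:ℝ) < N := by exact_mod_cast hN
  have h2N : (0:ℝ) < 2 * N := by linarith
  have hγpos : (0:ℝ) < γ := lt_of_lt_of_le one_pos hγ
  have hγ2 : (1:ℝ) ≤ γ ^ 2 := by nlinarith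
  have hγ2pos : (0:ℝ) < γ ^ 2 := by linarith
  have hEnn : ∀ v, 0 ≤ E v := by
    intro v; rw [hE]
    exact mul_nonneg (by positivity) (dot_self_nonneg'_s6 _)
  -- Step A : per-step decrease
  have stepA : ∀ k < d, E (u (k+1)) ≤ E (u k) -
      ((Khat (jsel k) *ᵥ (u k - y)) ⬝ᵥ (Khat (jsel k) *ᵥ (u k - y))) / (2 * N) := by
    intro k hk
    have hrw : u (k+1) - y = (u k - y) - Khat (jsel k) *ᵥ (u k - y) := by
      rw [hustep k hk]; abel
    rw [hE (u (k+1)), hE (u k), hrw, expand_sub]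
    exact stepA_arith (N:ℝ) _ _ _ hNpos (key_step (hPSD _) (hle1 _) (u k - y))
  -- Step B : representation of iterates
  have repB : ∀ k, k ≤ d → ∃ c : Fin m → Fin N → ℝ,
      (∀ j, j ∉ (Finset.range k).image jsel → c j = 0) ∧
      u k = ∑ j, Khat j *ᵥ c j := by
    intro k
    induction k with
    | zero =>
      intro _
      exact ⟨0, fun j _ => rfl, by simp [hu0, Matrix.mulVec_zero]⟩
    | succ k ih =>
      intro hk1
      have hk : k < d := hk1
      obtain ⟨c, hcs, hcr⟩ := ih hk.le
      refine ⟨fun j => c j + if j = jsel k then -(u k - y) else 0, ?_, ?_⟩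
      · intro j hj
        have h1 : j ∉ (Finset.range k).image jsel := by
          intro hmem
          apply hj
          simp only [Finset.mem_image, Finset.mem_range] at hmem ⊢
          obtain ⟨i, hi, hie⟩ := hmem
          exact ⟨i, by omega, hie⟩
        have h2 : j ≠ jsel k := by
          intro he
          apply hj
          simp only [Finset.mem_image, Finset.mem_range]
          exact ⟨k, by omega, he.symm⟩
        simp [hcs j h1, h2]
      · have hsplit : ∀ j : Fin m,
            Khat j *ᵥ (c j + if j = jsel k then -(u k - y) else 0) =
            Khat j *ᵥ c j + if j = jsel k then Khat j *ᵥ (-(u k - y)) else 0 := by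
          intro j
          rw [Matrix.mulVec_add]
          congr 1
          split_ifs <;> simp [Matrix.mulVec_zero]
        rw [hustep k hk]
        simp only [hsplit]
        rw [Finset.sum_add_distrib, ← hcr]
        have hsum2 : (∑ j : Fin m, if j = jsel k then Khat j *ᵥ (-(u k - y)) else 0)
            = Khat (jsel k) *ᵥ (-(u k - y)) := by
          rw [Finset.sum_ite_eq' Finset.univ (jsel k) (fun j => Khat j *ᵥ (-(u k - y)))]
          simp
        rw [hsum2, Matrix.mulVec_neg]
        abel
  -- Step C : the gradient-correlation bound
  have stepC : ∀ k < d, ∀ (J : Finset (Fin m)) (a : Fin m → Fin N → ℝ), J.card ≤ d →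
      ((u k - y) ⬝ᵥ (u k - y)) -
        ((∑ j ∈ J, Khat j *ᵥ a j - y) ⬝ᵥ (∑ j ∈ J, Khat j *ᵥ a j - y)) ≤
      γ ^ 2 * ((Khat (jsel k) *ᵥ (u k - y)) ⬝ᵥ (Khat (jsel k) *ᵥ (u k - y))) := by
    intro k hk J a hJcard
    obtain ⟨c, hcs, hcr⟩ := repB k hk.le
    set g := u k - y with hgdef
    set uhat := ∑ j ∈ J, Khat j *ᵥ a j with huhat
    set ghat := uhat - y with hghat
    set cful : Fin m → Fin N → ℝ := fun j => c j - (if j ∈ J then a j else 0) with hcful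
    set J' := (Finset.range k).image jsel ∪ J with hJ'
    have hcard : J'.card ≤ 2 * d := by
      calc J'.card ≤ ((Finset.range k).image jsel).card + J.card := Finset.card_union_le _ _
        _ ≤ k + d := by
            have := Finset.card_image_le (s := Finset.range k) (f := jsel)
            simp only [Finset.card_range] at this
            omega
        _ ≤ 2 * d := by omega
    have hex : ∀ j : Fin m, ∃ b, Khat j *ᵥ (Khat j *ᵥ b) = Khat j *ᵥ cful j :=
      fun j => exists_presqrt (hPSD j) (cful j)
    choose b hb using hex
    set a' : Fin m → Fin N → ℝ := fun j => if j ∈ J' then Khat j *ᵥ b j else 0 with ha'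
    have hrange : ∀ j, ∃ bb : Fin N → ℝ, a' j = Khat j *ᵥ bb := by
      intro j
      by_cases hj : j ∈ J'
      · exact ⟨b j, by simp [ha', hj]⟩
      · exact ⟨0, by simp [ha', hj, Matrix.mulVec_zero]⟩
    have hsupp : ∀ j ∉ J', a' j = 0 := by intro j hj; simp [ha', hj]
    have hcful0 : ∀ j ∉ J', cful j = 0 := by
      intro j hj
      have h1 : j ∉ (Finset.range k).image jsel := fun h => hj (Finset.mem_union_left _ h)
      have h2 : j ∉ J := fun h => hj (Finset.mem_union_right _ h)
      simp [hcful, hcs j h1, h2]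
    have hsum : (∑ j, Khat j *ᵥ a' j) = u k - uhat := by
      have h1 : u k - uhat = ∑ j, Khat j *ᵥ cful j := by
        have h2 : uhat = ∑ j : Fin m, (if j ∈ J then Khat j *ᵥ a j else 0) := by
          rw [huhat, Finset.sum_ite_mem, Finset.univ_inter]
        rw [hcr, h2, ← Finset.sum_sub_distrib]
        apply Finset.sum_congr rfl
        intro j _
        rw [hcful]
        simp only
        rw [Matrix.mulVec_sub]
        congr 1
        split_ifs <;> simp [Matrix.mulVec_zero]
      rw [h1]
      apply Finset.sum_congr rfl
      intro j _
      by_cases hj : j ∈ J'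
      · simp only [ha', if_pos hj]
        exact hb j
      · simp [ha', if_neg hj, hcful0 j hj, Matrix.mulVec_zero]
    have hγb := hγbound J' hcard a' hrange hsupp
    rw [hsum] at hγb
    set w := u k - uhat with hw
    set Kg := Khat (jsel k) *ᵥ g with hKg
    have hcorr : g ⬝ᵥ w ≤ Real.sqrt (Kg ⬝ᵥ Kg) * (γ * Real.sqrt (w ⬝ᵥ w)) := by
      have h1 : g ⬝ᵥ w = ∑ j, (Khat j *ᵥ g) ⬝ᵥ a' j := by
        rw [← hsum, dot_sum_s6]
        apply Finset.sum_congr rfl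
        intro j _
        exact symm_dot (herm_transpose (hPSD j).1) g (a' j)
      have h2 : ∀ j : Fin m, (Khat j *ᵥ g) ⬝ᵥ a' j ≤
          Real.sqrt (Kg ⬝ᵥ Kg) * Real.sqrt (a' j ⬝ᵥ a' j) := by
        intro j
        calc (Khat j *ᵥ g) ⬝ᵥ a' j
            ≤ Real.sqrt ((Khat j *ᵥ g) ⬝ᵥ (Khat j *ᵥ g)) * Real.sqrt (a' j ⬝ᵥ a' j) :=
              dot_cs _ _
          _ ≤ Real.sqrt (Kg ⬝ᵥ Kg) * Real.sqrt (a' j ⬝ᵥ a' j) := by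
              apply mul_le_mul_of_nonneg_right _ (Real.sqrt_nonneg _)
              exact Real.sqrt_le_sqrt (hjmax k hk j)
      calc g ⬝ᵥ w = ∑ j, (Khat j *ᵥ g) ⬝ᵥ a' j := h1
        _ ≤ ∑ j, Real.sqrt (Kg ⬝ᵥ Kg) * Real.sqrt (a' j ⬝ᵥ a' j) :=
            Finset.sum_le_sum fun j _ => h2 j
        _ = Real.sqrt (Kg ⬝ᵥ Kg) * ∑ j, Real.sqrt (a' j ⬝ᵥ a' j) := by
            rw [Finset.mul_sum]
        _ ≤ Real.sqrt (Kg ⬝ᵥ Kg) * (γ * Real.sqrt (w ⬝ᵥ w)) := by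
            apply mul_le_mul_of_nonneg_left hγb (Real.sqrt_nonneg _)
    have hwg : w = g - ghat := by rw [hw, hgdef, hghat]; abel
    rw [hwg] at hcorr
    have hident := dot_identity g ghat
    have hAB : g ⬝ᵥ g - ghat ⬝ᵥ ghat ≤ γ ^ 2 * (Kg ⬝ᵥ Kg) := by
      set A := Real.sqrt (Kg ⬝ᵥ Kg) with hA
      set B := Real.sqrt ((g - ghat) ⬝ᵥ (g - ghat)) with hB
      have hA2 : A ^ 2 = Kg ⬝ᵥ Kg := Real.sq_sqrt (dot_self_nonneg'_s6 _)
      have hB2 : B ^ 2 = (g - ghat) ⬝ᵥ (g - ghat) := Real.sq_sqrt (dot_self_nonneg'_s6 _)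
      have hgw : (g ⬝ᵥ g - ghat ⬝ᵥ ghat + B ^ 2) / 2 ≤ A * (γ * B) := by
        rw [hB2, ← hident]; exact hcorr
      nlinarith [sq_nonneg (γ * A - B), Real.sqrt_nonneg (Kg ⬝ᵥ Kg),
        Real.sqrt_nonneg ((g - ghat) ⬝ᵥ (g - ghat))]
    exact hAB
  -- conclusion
  apply le_of_forall_pos_le_add
  intro δ hδ
  have hSne : {e : ℝ | ∃ (J : Finset (Fin m)) (a : Fin m → Fin N → ℝ),
      J.card ≤ d ∧ e = E (∑ j ∈ J, Khat j *ᵥ a j)}.Nonempty :=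
    ⟨E (∑ j ∈ (∅ : Finset (Fin m)), Khat j *ᵥ (0 : Fin N → ℝ)),
      ⟨∅, fun _ => 0, by simp, rfl⟩⟩
  obtain ⟨e, he, helt⟩ := Real.lt_sInf_add_pos hSne hδ
  rw [← hEhat] at helt
  obtain ⟨J, a, hJcard, hee⟩ := he
  set q : ℝ := 1 - 1 / γ ^ 2 with hq
  have hq0 : 0 ≤ q := by
    have h1 : 1 / γ ^ 2 ≤ 1 := by rw [div_le_one hγ2pos]; exact hγ2
    rw [hq]; linarith
  have ind : ∀ k, k ≤ d →
      E (u k) - E (∑ j ∈ J, Khat j *ᵥ a j) ≤ 1 / 2 * q ^ k := by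
    intro k
    induction k with
    | zero =>
      intro _
      have hE0 : E (u 0) ≤ 1 / 2 := by
        rw [hu0, hE]
        have h0 : ((0 : Fin N → ℝ) - y) ⬝ᵥ ((0 : Fin N → ℝ) - y) = y ⬝ᵥ y := by simp
        rw [h0]
        have h1 : 1 / (2 * (N : ℝ)) * (y ⬝ᵥ y) ≤ 1 / (2 * (N : ℝ)) * N :=
          mul_le_mul_of_nonneg_left hy (by positivity)
        have heq : 1 / (2 * (N : ℝ)) * N = 1 / 2 := by field_simp
        linarith
      have h2 := hEnn (∑ j ∈ J, Khat j *ᵥ a j)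
      simp only [pow_zero, mul_one]
      linarith
    | succ k ih =>
      intro hk1
      have hk : k < d := hk1
      have ihk := ih (Nat.le_of_lt hk)
      have hdec := stepA k hk
      have hC := stepC k hk J a hJcard
      have hEk := hE (u k)
      have hEuh := hE (∑ j ∈ J, Khat j *ᵥ a j)
      set R := (Khat (jsel k) *ᵥ (u k - y)) ⬝ᵥ (Khat (jsel k) *ᵥ (u k - y)) with hR
      set X := (u k - y) ⬝ᵥ (u k - y) with hX
      set Y := (∑ j ∈ J, Khat j *ᵥ a j - y) ⬝ᵥ (∑ j ∈ J, Khat j *ᵥ a j - y) with hY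
      have hRnn : 0 ≤ R := dot_self_nonneg'_s6 _
      by_cases hcase : E (u k) - E (∑ j ∈ J, Khat j *ᵥ a j) ≤ 0
      · have h2 := div_nonneg hRnn (le_of_lt h2N)
        have h3 : (0 : ℝ) ≤ 1 / 2 * q ^ (k + 1) := by positivity
        linarith
      · push_neg at hcase
        have hdiv : (E (u k) - E (∑ j ∈ J, Khat j *ᵥ a j)) / γ ^ 2 ≤ R / (2 * N) := by
          rw [div_le_div_iff₀ hγ2pos h2N, hEk, hEuh]
          have hexpand : (1 / (2 * (N : ℝ)) * X - 1 / (2 * N) * Y) * (2 * N) = X - Y := by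
            field_simp
          rw [hexpand]
          linarith [hC]
        have hmul : (E (u k) - E (∑ j ∈ J, Khat j *ᵥ a j)) -
            (E (u k) - E (∑ j ∈ J, Khat j *ᵥ a j)) / γ ^ 2 =
            (E (u k) - E (∑ j ∈ J, Khat j *ᵥ a j)) * q := by
          rw [hq]; ring
        have hmr : (E (u k) - E (∑ j ∈ J, Khat j *ᵥ a j)) * q ≤ (1 / 2 * q ^ k) * q :=
          mul_le_mul_of_nonneg_right ihk hq0
        have hpow : (1 / 2 * q ^ k) * q = 1 / 2 * q ^ (k + 1) := by ring
        linarith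
  have hfin := ind d le_rfl
  have hqd : q ^ d ≤ 12 * εstar := by
    have h1 : q ≤ Real.exp (-(1 / γ ^ 2)) := by
      have h2 := Real.add_one_le_exp (-(1 / γ ^ 2))
      rw [hq]; linarith
    have h2 : q ^ d ≤ Real.exp (-(1 / γ ^ 2)) ^ d := pow_le_pow_left₀ hq0 h1 d
    have h3 : Real.exp (-(1 / γ ^ 2)) ^ d = Real.exp ((d : ℝ) * (-(1 / γ ^ 2))) :=
      (Real.exp_nat_mul _ d).symm
    have h4 : (d : ℝ) * (-(1 / γ ^ 2)) ≤ Real.log (12 * εstar) := by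
      have hL : Real.log (1 / (12 * εstar)) = -Real.log (12 * εstar) := by
        rw [one_div, Real.log_inv]
      rw [hL] at hdlarge
      rw [show (d : ℝ) * (-(1 / γ ^ 2)) = (-(d : ℝ)) / γ ^ 2 by ring,
        div_le_iff₀ hγ2pos]
      rcases le_or_gt 0 (Real.log (12 * εstar)) with hL0 | hL0
      · have hd0 : (0 : ℝ) ≤ (d : ℝ) := Nat.cast_nonneg d
        nlinarith
      · nlinarith
    have h5 : Real.exp ((d : ℝ) * (-(1 / γ ^ 2))) ≤ Real.exp (Real.log (12 * εstar)) :=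
      Real.exp_le_exp.mpr h4
    rw [Real.exp_log (by positivity)] at h5
    calc q ^ d ≤ Real.exp (-(1 / γ ^ 2)) ^ d := h2
      _ = Real.exp ((d : ℝ) * (-(1 / γ ^ 2))) := h3
      _ ≤ 12 * εstar := h5
  have hee' : E (∑ j ∈ J, Khat j *ᵥ a j) = e := hee.symm
  linarith [hfin, hqd, helt, hεstar]
end
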